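/- Let $\bar{n}, \bar{m} \in N_T^d$. If there exist $\gamma \in GL_d(\mathbb{F}_q[t])$ and $a \in F^{\times}$ such that $\gamma\, l_{\bar{n}} = a\, l_{\bar{m}}$ (equality of $\mathcal{O}$-submodules of $F^d$), then $\bar{n} = \bar{m}$. In other words, distinct tuples in $N_T^d$ give lattices lying in distinct orbits under the combined action of $GL_d(\mathbb{F}_q[t])$ and scaling by $F^{\times}$. -/

import Mathlib

open Matrix Polynomial

noncomputable section

/-- `t = X⁻¹` in the Laurent series field `F = 𝔽_q((X))`. -/
def tF (Fq : Type) [Field Fq] : LaurentSeries Fq := HahnSeries.single (-1 : ℤ) (1 : Fq)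

/-- The embedding of the polynomial ring `𝔽_q[t]` into `F = 𝔽_q((X))`, sending the
polynomial variable to `t = X⁻¹`. -/
def polyToF (Fq : Type) [Field Fq] : Polynomial Fq →+* LaurentSeries Fq :=
  Polynomial.eval₂RingHom (HahnSeries.C) (tF Fq)

/-- The lattice `l_n̄ = t^{n₁}𝒪e₁ ⊕ ⋯ ⊕ t^{n_d}𝒪e_d` as an `𝒪`-submodule of `F^d`,
where `𝒪 = 𝔽_q[[X]]` acts on `F = 𝔽_q((X))` via the inclusion, and
`t^{n} = HahnSeries.single (-n) 1`. -/
def lattM (Fq : Type) [Field Fq] {d : ℕ} (n : Fin d → ℤ) :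
    Submodule (PowerSeries Fq) (Fin d → LaurentSeries Fq) :=
  Submodule.span (PowerSeries Fq)
    (Set.range fun i : Fin d =>
      (HahnSeries.single (-(n i)) (1 : Fq) : LaurentSeries Fq) •
        (Pi.single i (1 : LaurentSeries Fq) : Fin d → LaurentSeries Fq))

/-- The image `g L` of an `𝒪`-submodule `L ⊆ F^d` under a matrix `g ∈ M_d(F)`. -/
def actM (Fq : Type) [Field Fq] {d : ℕ} (g : Matrix (Fin d) (Fin d) (LaurentSeries Fq))
    (L : Submodule (PowerSeries Fq) (Fin d → LaurentSeries Fq)) :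
    Submodule (PowerSeries Fq) (Fin d → LaurentSeries Fq) :=
  L.map ((g.mulVecLin).restrictScalars (PowerSeries Fq))

/-- The image `a L` of an `𝒪`-submodule `L ⊆ F^d` under scalar multiplication by `a ∈ F`. -/
def scaleM (Fq : Type) [Field Fq] {d : ℕ} (a : LaurentSeries Fq)
    (L : Submodule (PowerSeries Fq) (Fin d → LaurentSeries Fq)) :
    Submodule (PowerSeries Fq) (Fin d → LaurentSeries Fq) :=
  L.map ((LinearMap.lsmul (LaurentSeries Fq) (Fin d → LaurentSeries Fq) a).restrictScalars
    (PowerSeries Fq))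

/-- The image in `M_d(F)` of a matrix over `𝔽_q[t]`. -/
def glToF (Fq : Type) [Field Fq] {d : ℕ} (γ : GL (Fin d) (Polynomial Fq)) :
    Matrix (Fin d) (Fin d) (LaurentSeries Fq) :=
  (γ : Matrix (Fin d) (Fin d) (Polynomial Fq)).map (polyToF Fq)

/-- The stabilizer `S_n̄ = {γ ∈ GL_d(𝔽_q[t]) : γ l_n̄ = l_n̄}`. -/
def Stab (Fq : Type) [Field Fq] {d : ℕ} (n : Fin d → ℤ) :
    Set (GL (Fin d) (Polynomial Fq)) :=
  {γ | actM Fq (glToF Fq γ) (lattM Fq n) = lattM Fq n}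

/-- `N_T^d`: integer tuples `n₁ ≥ n₂ ≥ ⋯ ≥ n_d = 0`. -/
def NT {d : ℕ} (n : Fin d → ℤ) : Prop :=
  (∀ i j : Fin d, i ≤ j → n j ≤ n i) ∧ ∀ i : Fin d, (i : ℕ) = d - 1 → n i = 0

/-- The difference sequence `m_i = n_i - n_{i+1}`. -/
def mdiff {d : ℕ} (n : Fin d → ℤ) (i : ℕ) (h : i + 1 < d) : ℤ :=
  n ⟨i, Nat.lt_of_succ_lt h⟩ - n ⟨i + 1, h⟩

end

/-!
Scaling by `a` replaces `m̄` by `m̄ - ord a`, so it suffices to show that `γ l_n̄ = l_p̄` with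
`n̄, p̄` non-increasing forces `n̄ = p̄`. If `n_i ≥ 0` then `e_i ∈ l_n̄`, so the `i`-th column of
`γ` is a polynomial vector in `l_p̄`; a nonzero polynomial in `t = X⁻¹` has valuation `≥ 1`, so
this column vanishes in every row `j` with `p_j < 0`. As the columns of `γ` are linearly
independent over `𝔽_q[t]`, `#{i | n_i ≥ 0} ≤ #{j | p_j ≥ 0}`, and likewise after shifting both
tuples by any `k` and for `γ⁻¹`. For non-increasing tuples these counts of superlevel sets
determine the tuple, and `n_d = m_d = 0` then gives `ord a = 0`.
-/

open Finset WithZero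

theorem Matrix.card_le_card_of_isUnit {R ι : Type*} [CommRing R] [Nontrivial R] [Fintype ι]
    [DecidableEq ι] {M : Matrix ι ι R} (hM : IsUnit M) {s t : Finset ι}
    (h : ∀ i ∈ s, ∀ j ∉ t, M j i = 0) : #s ≤ #t := by
  let cols : s → t → R := fun i j => M j i
  have hcols : LinearIndependent R cols := by
    refine LinearIndependent.of_comp (Function.ExtendByZero.linearMap R ((↑) : t → ι)) ?_
    convert (Matrix.linearIndependent_cols_of_isUnit hM).comp _ Subtype.val_injective
    ext i j
    by_cases hj : j ∈ t
    · simpa [cols] using Subtype.val_injective.extend_apply (cols i) (0 : ι → R) ⟨j, hj⟩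
    · simp [cols, Function.extend, hj, h i.1 i.2 j hj]
  simpa using hcols.fintype_card_le_finrank

theorem Antitone.le_of_forall_card_filter_le {ι α : Type*} [LinearOrder ι] [Fintype ι]
    [LinearOrder α] {f g : ι → α} (hf : Antitone f) (hg : Antitone g)
    (h : ∀ a, #{i | a ≤ g i} ≤ #{i | a ≤ f i}) : g ≤ f := by
  intro i
  by_contra! hlt
  have hsub : ({l | g i ≤ f l} : Finset ι) ⊂ ({l | g i ≤ g l} : Finset ι) := by
    refine (ssubset_iff_of_subset fun l hl => ?_).2 ⟨i, by simp, by simpa using hlt⟩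
    simp only [mem_filter, mem_univ, true_and] at hl ⊢
    obtain hil | hli := le_or_gt i l
    · exact absurd (hl.trans (hf hil)) (not_le.2 hlt)
    · exact hg hli.le
  exact (card_lt_card hsub).not_ge (h (g i))

namespace LaurentSeries

variable {K : Type*} [Field K]

theorem valuation_le_exp_iff_exists_eq_single_mul {x : LaurentSeries K} {e : ℤ} :
    Valued.v x ≤ exp e ↔
      ∃ c : PowerSeries K, x = HahnSeries.single (-e) 1 * (c : LaurentSeries K) := by
  constructor
  · intro hx
    obtain ⟨c, hc⟩ := (val_le_one_iff_eq_coe K (HahnSeries.single e 1 * x)).1 <| by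
      rw [map_mul, valuation_single_zpow, WithZero.exp_neg, inv_mul_le_one₀ exp_pos]
      exact hx
    refine ⟨c, ?_⟩
    rw [hc, ← mul_assoc, HahnSeries.single_mul_single]
    simp
  · rintro ⟨c, rfl⟩
    rw [map_mul, valuation_single_zpow, neg_neg]
    exact mul_le_of_le_one_right' ((val_le_one_iff_eq_coe K _).2 ⟨c, rfl⟩)

end LaurentSeries

section Lattice

variable {Fq : Type} [Field Fq] {d : ℕ}

theorem mem_lattM_iff {n : Fin d → ℤ} {x : Fin d → LaurentSeries Fq} :
    x ∈ lattM Fq n ↔ ∀ i, Valued.v (x i) ≤ exp (n i) := by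
  have hcoord (c : Fin d → PowerSeries Fq) (i : Fin d) :
      (∑ j, c j • ((HahnSeries.single (-n j) 1 : LaurentSeries Fq) • Pi.single j 1)) i =
        HahnSeries.single (-n i) 1 * (c i : LaurentSeries Fq) := by
    simp [Pi.single_apply, Algebra.smul_def, mul_comm]
  simp_rw [lattM, Submodule.mem_span_range_iff_exists_fun,
    LaurentSeries.valuation_le_exp_iff_exists_eq_single_mul]
  constructor
  · rintro ⟨c, rfl⟩ i
    exact ⟨c i, hcoord c i⟩
  · intro hx
    choose c hc using hx
    exact ⟨c, funext fun i => (hcoord c i).trans (hc i).symm⟩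

theorem scaleM_lattM {a : LaurentSeries Fq} {c : ℤ} (ha : Valued.v a = exp (-c))
    (m : Fin d → ℤ) : scaleM Fq a (lattM Fq m) = lattM Fq (fun i => m i - c) := by
  have ha0 : a ≠ 0 := ne_zero_of_map (f := Valued.v) (ha ▸ exp_ne_zero)
  ext x
  simp only [scaleM, Submodule.mem_map, mem_lattM_iff, LinearMap.restrictScalars_apply,
    LinearMap.lsmul_apply]
  constructor
  · rintro ⟨y, hy, rfl⟩ i
    rw [Pi.smul_apply, smul_eq_mul, map_mul, ha, sub_eq_neg_add, exp_add]
    gcongr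
    exact hy i
  · intro hx
    refine ⟨a⁻¹ • x, fun i => ?_, smul_inv_smul₀ ha0 x⟩
    calc Valued.v (a⁻¹ * x i) = exp c * Valued.v (x i) := by
          rw [map_mul, map_inv₀, ha, WithZero.exp_neg, inv_inv]
      _ ≤ exp c * exp (m i - c) := by gcongr; exact hx i
      _ = exp (m i) := by rw [← exp_add, add_sub_cancel]

theorem scaleM_actM (a : LaurentSeries Fq) (g : Matrix (Fin d) (Fin d) (LaurentSeries Fq))
    (L : Submodule (PowerSeries Fq) (Fin d → LaurentSeries Fq)) :
    scaleM Fq a (actM Fq g L) = actM Fq g (scaleM Fq a L) := by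
  rw [scaleM, actM, actM, scaleM, ← Submodule.map_comp, ← Submodule.map_comp]
  congr 1
  exact LinearMap.ext fun x => (mulVec_smul g a x).symm

theorem glToF_inv_mul (γ : GL (Fin d) (Polynomial Fq)) : glToF Fq γ⁻¹ * glToF Fq γ = 1 := by
  rw [glToF, glToF, ← Matrix.map_mul, Units.inv_mul, Matrix.map_one _ (map_zero _) (map_one _)]

theorem actM_inv_actM (γ : GL (Fin d) (Polynomial Fq))
    (L : Submodule (PowerSeries Fq) (Fin d → LaurentSeries Fq)) :
    actM Fq (glToF Fq γ⁻¹) (actM Fq (glToF Fq γ) L) = L := by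
  rw [actM, actM, ← Submodule.map_comp]
  convert Submodule.map_id L
  exact LinearMap.ext fun x => by simp [mulVec_mulVec, glToF_inv_mul]

theorem polyToF_monomial (j : ℕ) (b : Fq) :
    polyToF Fq (Polynomial.monomial j b) = HahnSeries.single (-j : ℤ) b := by
  simp [polyToF, tF, HahnSeries.single_pow, HahnSeries.C_apply, HahnSeries.single_mul_single]

theorem polyToF_coeff_neg (q : Polynomial Fq) (j : ℕ) :
    (polyToF Fq q).coeff (-j) = q.coeff j := by
  induction q using Polynomial.induction_on' with
  | add p q hp hq => simp [hp, hq]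
  | monomial k b =>
    rw [polyToF_monomial, HahnSeries.coeff_single, Polynomial.coeff_monomial]
    simp [eq_comm]

theorem eq_zero_of_valuation_polyToF_le {q : Polynomial Fq} {e : ℤ} (he : e < 0)
    (hq : Valued.v (polyToF Fq q) ≤ exp e) : q = 0 := by
  rw [← neg_neg e, LaurentSeries.valuation_le_iff_coeff_lt_eq_zero] at hq
  ext j
  rw [← polyToF_coeff_neg, hq _ (by omega), Polynomial.coeff_zero]

theorem single_one_mem_lattM {n : Fin d → ℤ} {i : Fin d} (hi : 0 ≤ n i) :
    Pi.single i 1 ∈ lattM Fq n := by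
  refine mem_lattM_iff.2 fun j => ?_
  rcases eq_or_ne j i with rfl | hji
  · rw [Pi.single_eq_same, map_one, ← exp_zero, exp_le_exp]
    exact hi
  · simp [hji]

variable {n p : Fin d → ℤ} {γ : GL (Fin d) (Polynomial Fq)}

theorem apply_eq_zero_of_actM_lattM_eq (h : actM Fq (glToF Fq γ) (lattM Fq n) = lattM Fq p)
    {i j : Fin d} (hi : 0 ≤ n i) (hj : p j < 0) :
    (γ : Matrix (Fin d) (Fin d) (Polynomial Fq)) j i = 0 := by
  have hcol : glToF Fq γ *ᵥ Pi.single i 1 ∈ lattM Fq p :=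
    h ▸ Submodule.mem_map_of_mem (single_one_mem_lattM hi)
  apply eq_zero_of_valuation_polyToF_le hj
  simpa [mulVec_single_one, glToF] using mem_lattM_iff.1 hcol j

theorem card_nonneg_le_of_actM_lattM_eq
    (h : actM Fq (glToF Fq γ) (lattM Fq n) = lattM Fq p) :
    #{i | 0 ≤ n i} ≤ #{j | 0 ≤ p j} :=
  Matrix.card_le_card_of_isUnit γ.isUnit fun i hi j hj =>
    apply_eq_zero_of_actM_lattM_eq h (by simpa using hi) (by simpa using hj)

theorem actM_lattM_sub (h : actM Fq (glToF Fq γ) (lattM Fq n) = lattM Fq p) (k : ℤ) :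
    actM Fq (glToF Fq γ) (lattM Fq (fun i => n i - k)) = lattM Fq (fun i => p i - k) := by
  have hk : Valued.v (HahnSeries.single k (1 : Fq) : LaurentSeries Fq) = exp (-k) :=
    LaurentSeries.valuation_single_zpow Fq k
  rw [← scaleM_lattM hk, ← scaleM_lattM hk, ← scaleM_actM, h]

theorem le_of_actM_lattM_eq (hn : Antitone n) (hp : Antitone p)
    (h : actM Fq (glToF Fq γ) (lattM Fq n) = lattM Fq p) : n ≤ p :=
  hp.le_of_forall_card_filter_le hn fun k => by
    simpa only [sub_nonneg] using card_nonneg_le_of_actM_lattM_eq (actM_lattM_sub h k)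

end Lattice

open Matrix Polynomial in
theorem fundamental_domain_disjointness_general (Fq : Type) [Field Fq]
    (d : ℕ) (n m : Fin d → ℤ) (hn : NT n) (hm : NT m)
    (γ : GL (Fin d) (Polynomial Fq)) (a : LaurentSeries Fq) (ha : a ≠ 0)
    (h : actM Fq (glToF Fq γ) (lattM Fq n) = scaleM Fq a (lattM Fq m)) :
    n = m := by
  obtain ⟨c, hc⟩ : ∃ c : ℤ, Valued.v a = exp (-c) :=
    ⟨-log (Valued.v a), by rw [neg_neg, exp_log ((Valuation.ne_zero_iff _).2 ha)]⟩
  rw [scaleM_lattM hc] at h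
  have hn_anti : Antitone n := fun i j hij => hn.1 i j hij
  have hmc_anti : Antitone fun i => m i - c := fun i j hij => sub_le_sub_right (hm.1 i j hij) c
  have hnp : n = fun i => m i - c :=
    le_antisymm (le_of_actM_lattM_eq hn_anti hmc_anti h)
      (le_of_actM_lattM_eq hmc_anti hn_anti (by rw [← h, actM_inv_actM]))
  funext i
  have hd : d - 1 < d := by have := i.isLt; omega
  have hlast := congrFun hnp ⟨d - 1, hd⟩
  rw [hn.2 _ rfl, hm.2 _ rfl] at hlast
  have hi := congrFun hnp i
  omega

open Matrix Polynomial in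
/-- distinct tuples in `N_T^d` give lattices in distinct orbits: if
`γ l_n̄ = a l_m̄` for some `γ ∈ GL_d(𝔽_q[t])` and `a ∈ F^×`, then `n̄ = m̄`. -/
theorem fundamental_domain_disjointness (Fq : Type) [Field Fq] [Fintype Fq]
    (d : ℕ) (hd : 2 ≤ d) (n m : Fin d → ℤ) (hn : NT n) (hm : NT m)
    (γ : GL (Fin d) (Polynomial Fq)) (a : LaurentSeries Fq) (ha : a ≠ 0)
    (h : actM Fq (glToF Fq γ) (lattM Fq n) = scaleM Fq a (lattM Fq m)) :
    n = m :=
  fundamental_domain_disjointness_general Fq d n m hn hm γ a ha h
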